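/- Let ℓ be a prime and m, n ∈ ℕ ∪ {∞} with n ≤ m. Let K be a field with μ_{ℓ^m} ⊂ K. Then the canonical map 𝔤^m(K) → 𝔤^n(K), σ ↦ σ_n, is surjective, and its kernel is ℓ^n·𝔤^m(K); in particular it induces an isomorphism 𝔤^m(K)/ℓ^n·𝔤^m(K) ≅ 𝔤^n(K). -/

import Mathlib

/-!
Write `A` for `Kˣ`, viewed additively. If `μ_{ℓ^m} ⊂ K` and `k + j ≤ m`, every `ℓ^k`-torsion
element `x` of `A` is an `ℓ^j`-th multiple: `X^{ℓ^j} - x` divides `X^{ℓ^{k+j}} - 1`, which splits.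

Embed `ℤ/N` into the injective group `ℝ/ℤ` as its `N`-torsion. Reduction `ℤ/ℓ^m → ℤ/ℓ^n` becomes
multiplication by `ℓ^{m-n}`, so both lifting a homomorphism `A → ℤ/ℓ^n` and dividing by `ℓ^n` a
homomorphism `A → ℤ/ℓ^m` that vanishes mod `ℓ^n` amount to dividing by some `d` a homomorphism
`A → ℝ/ℤ` killed by some `e`, with `de = ℓ^m`. By injectivity of `ℝ/ℤ` this is possible as soon as
the `d`-torsion of `A` lies in `eA`, which is the torsion statement above.

For `m = ∞` one lifts step by step along `ℤ/ℓ^{k+1} → ℤ/ℓ^k` and passes to the limit `ℤ_ℓ`; the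
kernel is computed directly, as `ℤ_ℓ` is a domain.
-/

open Polynomial

noncomputable section

/-- The coefficient ring `Λ_m`: `ℤ/ℓ^m` for finite `m`, and `ℤ_ℓ` for `m = ∞`. -/
def Lam (ℓ : ℕ) [Fact ℓ.Prime] : ℕ∞ → Type
  | ⊤ => PadicInt ℓ
  | (m : ℕ) => ZMod (ℓ ^ m)

instance (ℓ : ℕ) [Fact ℓ.Prime] : (m : ℕ∞) → CommRing (Lam ℓ m)
  | ⊤ => inferInstanceAs (CommRing (PadicInt ℓ))
  | (m : ℕ) => inferInstanceAs (CommRing (ZMod (ℓ ^ m)))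

/-- The canonical projection `Λ_m → Λ_n` (for `n ≤ m`; junk value `0` otherwise). -/
def LamProj (ℓ : ℕ) [Fact ℓ.Prime] : (m n : ℕ∞) → Lam ℓ m →+ Lam ℓ n
  | ⊤, ⊤ => AddMonoidHom.id _
  | ⊤, (n : ℕ) => (PadicInt.toZModPow n).toAddMonoidHom
  | (m : ℕ), (n : ℕ) =>
      if h : ℓ ^ n ∣ ℓ ^ m then (ZMod.castHom h (ZMod (ℓ ^ n))).toAddMonoidHom else 0
  | (_ : ℕ), ⊤ => 0

/-- The `ℓ^m`-minimized Galois group `𝔤^m(K) = Hom(Kˣ, Λ_m)`. -/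
abbrev gal (ℓ : ℕ) [Fact ℓ.Prime] (m : ℕ∞) (K : Type*) [Field K] : Type _ :=
  Additive Kˣ →+ Lam ℓ m

variable {ℓ : ℕ} [Fact ℓ.Prime] {K : Type*} [Field K]

open scoped Classical

/-- Evaluation of `σ ∈ 𝔤^m(K)` at a unit of `K`. -/
def galu {m : ℕ∞} (σ : gal ℓ m K) (x : Kˣ) : Lam ℓ m :=
  σ (Additive.ofMul x)

/-- Evaluation of `σ ∈ 𝔤^m(K)` at an arbitrary element of `K` (junk value `0` at `0`). -/
def galApp {m : ℕ∞} (σ : gal ℓ m K) (x : K) : Lam ℓ m :=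
  if hx : x ≠ 0 then galu σ (Units.mk0 x hx) else 0

/-- Scalar multiplication of `𝔤^m(K)` by `Λ_m`. -/
def galSmul {m : ℕ∞} (a : Lam ℓ m) (σ : gal ℓ m K) : gal ℓ m K :=
  AddMonoidHom.mk' (fun x => a * σ x) (by intro x y; simp only [map_add, mul_add])

/-- The canonical map `𝔤^m(K) → 𝔤^n(K)`, `σ ↦ σ_n`. -/
def galProj (m n : ℕ∞) (σ : gal ℓ m K) : gal ℓ n K :=
  (LamProj ℓ m n).comp σ

/-- `(σ,τ)` is a C-pair: `σ(x)·τ(1−x) = σ(1−x)·τ(x)` for all `x ∈ K ∖ {0,1}`. -/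
def IsCPair {m : ℕ∞} (σ τ : gal ℓ m K) : Prop :=
  ∀ x : K, x ≠ 0 → x ≠ 1 →
    galApp σ x * galApp τ (1 - x) = galApp σ (1 - x) * galApp τ x

/-- A subset of `𝔤^m(K)` is a C-set if all pairs of its elements are C-pairs. -/
def IsCSet {m : ℕ∞} (S : Set (gal ℓ m K)) : Prop :=
  ∀ σ ∈ S, ∀ τ ∈ S, IsCPair σ τ

/-- `μ_{c·ℓ^m} ⊂ K`: the polynomial `X^{c·ℓ^m} − 1` splits completely in `K`
(for all finite exponents when `m = ∞`). -/
def MuIn (K : Type*) [Field K] (c ℓ : ℕ) : ℕ∞ → Prop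
  | ⊤ => ∀ k : ℕ, Polynomial.Splits ((Polynomial.X ^ (c * ℓ ^ k) - 1 : K[X]).map (RingHom.id K))
  | (N : ℕ) => Polynomial.Splits ((Polynomial.X ^ (c * ℓ ^ N) - 1 : K[X]).map (RingHom.id K))

/-- `M_r(n) = (r+1)·n − r`. -/
def Mfun (r : ℕ) : ℕ∞ → ℕ∞
  | ⊤ => ⊤
  | (n : ℕ) => (((r + 1) * n - r : ℕ) : ℕ∞)

/-- `N(n) = M_1((6·ℓ^{3n−2} − 7)·(n−1) + 3n − 2)`. -/
def Nfun (ℓ : ℕ) : ℕ∞ → ℕ∞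
  | ⊤ => ⊤
  | (n : ℕ) => Mfun 1 (((6 * ℓ ^ (3 * n - 2) - 7) * (n - 1) + 3 * n - 2 : ℕ) : ℕ∞)

/-- `R(n) = N(M_2(M_1(n)))`. -/
def Rfun (ℓ : ℕ) (n : ℕ∞) : ℕ∞ :=
  Nfun ℓ (Mfun 2 (Mfun 1 n))

/-- The minimized inertia group `I_v^m` of a valuation (valuation subring) of `K`:
homomorphisms vanishing on the `v`-units. -/
def inertia (ℓ : ℕ) [Fact ℓ.Prime] (m : ℕ∞) (A : ValuationSubring K) : Set (gal ℓ m K) :=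
  {σ | ∀ x : Kˣ, A.valuation (x : K) = 1 → galu σ x = 0}

/-- The minimized decomposition group `D_v^m` of a valuation (valuation subring) of `K`:
homomorphisms vanishing on the principal `v`-units `1 + 𝔪_v`. -/
def decomp (ℓ : ℕ) [Fact ℓ.Prime] (m : ℕ∞) (A : ValuationSubring K) : Set (gal ℓ m K) :=
  {σ | ∀ x : Kˣ, A.valuation ((x : K) - 1) < 1 → galu σ x = 0}

/-- A subgroup of (the units of) a linearly ordered group-with-zero is convex. -/
def IsConvexSub {Γ : Type*} [LinearOrderedCommGroupWithZero Γ] (C : Subgroup Γˣ) : Prop :=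
  ∀ γ c : Γˣ, (1 : Γ) ≤ (γ : Γ) → (γ : Γ) ≤ (c : Γ) → c ∈ C → γ ∈ C

/-- A subgroup is `ℓ`-divisible. -/
def IsLDivisible {Γ : Type*} [LinearOrderedCommGroupWithZero Γ] (ℓ : ℕ) (C : Subgroup Γˣ) :
    Prop :=
  ∀ c ∈ C, ∃ d ∈ C, d ^ ℓ = c

/-- Condition (V1): the value group `vK` contains no nontrivial `ℓ`-divisible convex
subgroups. -/
def NoLDivConvex (ℓ : ℕ) (A : ValuationSubring K) : Prop :=
  ∀ C : Subgroup (A.ValueGroup)ˣ, IsConvexSub C → IsLDivisible ℓ C → C = ⊥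

/-- The residue field `Kv` of a valuation. -/
abbrev resField (A : ValuationSubring K) : Type _ := IsLocalRing.ResidueField A

/-- `τ ∈ 𝔤^m(Kv)` is the element induced by `σ ∈ D_v^m` (i.e. `τ = σ_v`): for every
`v`-unit `x` one has `τ(x̄) = σ(x)`. -/
def Induces {m : ℕ∞} (A : ValuationSubring K) (σ : gal ℓ m K)
    (τ : gal ℓ m (resField A)) : Prop :=
  ∀ (x : Kˣ) (h : A.valuation (x : K) = 1),
    galApp τ (IsLocalRing.residue A ⟨(x : K), (A.valuation_le_one_iff (x : K)).mp h.le⟩) =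
      galu σ x

/-- An `m`-visible valuation. -/
def IsVisibleVal (ℓ : ℕ) [Fact ℓ.Prime] (m : ℕ∞) (A : ValuationSubring K) : Prop :=
  NoLDivConvex ℓ A ∧
  ¬ IsCSet (Set.univ : Set (gal ℓ m (resField A))) ∧
  ∀ B : ValuationSubring (resField A),
    decomp ℓ m B = Set.univ → inertia ℓ m B = {0}

/-- `Σ^⊥ = ∩_{σ ∈ Σ} ker σ ⊆ Kˣ`. -/
def orth {m : ℕ∞} (S : Set (gal ℓ m K)) : Set Kˣ :=
  {x | ∀ σ ∈ S, galu σ x = 0}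

/-- `σ` is valuative: `σ ∈ I_v^m` for some valuation `v` of `K`. -/
def IsValuative {m : ℕ∞} (σ : gal ℓ m K) : Prop :=
  ∃ A : ValuationSubring K, σ ∈ inertia ℓ m A

/-- `V = v_σ` is the coarsest valuation with `σ ∈ I_V^m`. -/
def IsVsigma {m : ℕ∞} (σ : gal ℓ m K) (V : ValuationSubring K) : Prop :=
  σ ∈ inertia ℓ m V ∧ ∀ W : ValuationSubring K, σ ∈ inertia ℓ m W → W ≤ V

/-- `V = v_Σ` is the coarsest valuation with `Σ ⊆ I_V^m`. -/
def IsVSet {m : ℕ∞} (S : Set (gal ℓ m K)) (V : ValuationSubring K) : Prop :=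
  S ⊆ inertia ℓ m V ∧ ∀ W : ValuationSubring K, S ⊆ inertia ℓ m W → W ≤ V

/-- The set `D^m_n(Σ)`. -/
def Dmn (n m : ℕ∞) (S : Set (gal ℓ n K)) : Set (gal ℓ n K) :=
  {τ | ∀ σ ∈ S, ∃ τ₁ τ₂ : gal ℓ n K, ∃ σ' τ' τ₁' τ₂' : gal ℓ m K,
    galProj m n σ' = σ ∧ galProj m n τ' = τ ∧ galProj m n τ₁' = τ₁ ∧ galProj m n τ₂' = τ₂ ∧
    ¬ IsCPair τ₁ τ₂ ∧ IsCPair σ' τ' ∧ IsCPair σ' τ₁' ∧ IsCPair σ' τ₂'}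

/-- The set `I^m_n(Σ)`. -/
def Imn (n m : ℕ∞) (S : Set (gal ℓ n K)) : Set (gal ℓ n K) :=
  {σ | σ ∈ S ∧ ∃ σ' : gal ℓ m K, galProj m n σ' = σ ∧
    ∀ τ ∈ S, ∃ τ' : gal ℓ m K, galProj m n τ' = τ ∧ IsCPair σ' τ'}

/-- `K` is a function field over `k`, i.e. a finitely generated field extension. -/
def IsFunctionField (k K : Type*) [Field k] [Field K] [Algebra k K] : Prop :=
  ∃ s : Finset K, IntermediateField.adjoin k (s : Set K) = ⊤

/-- `trdeg(K|k) = d`. -/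
def HasTrdeg (k K : Type*) [Field k] [Field K] [Algebra k K] (d : ℕ) : Prop :=
  ∃ b : Fin d → K, IsTranscendenceBasis k b


/-- The set `ℓ^n·𝔤^m(K)` (interpreted as the trivial subgroup when `n = ∞`). -/
def lPowSet (ℓ : ℕ) [Fact ℓ.Prime] (m : ℕ∞) (K : Type*) [Field K] : ℕ∞ → Set (gal ℓ m K)
  | ⊤ => {0}
  | (k : ℕ) => {x | ∃ σ : gal ℓ m K, x = galSmul ((ℓ : Lam ℓ m) ^ k) σ}

end

theorem exists_pow_eq_of_splits {K : Type*} [Field K] {d N : ℕ} (hd : d ≠ 0) (hN : N ≠ 0)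
    (hs : Splits (X ^ (d * N) - 1 : K[X])) {x : K} (hx : x ^ N = 1) : ∃ y, y ^ d = x := by
  have hdvd : X ^ d - C x ∣ X ^ (d * N) - 1 := by
    simpa [← pow_mul, ← C_pow, hx] using sub_dvd_pow_sub_pow (X ^ d) (C x) N
  have hne : (X ^ (d * N) - 1 : K[X]) ≠ 0 := by
    simpa using X_pow_sub_C_ne_zero (Nat.pos_of_ne_zero (mul_ne_zero hd hN)) (1 : K)
  obtain ⟨y, hy⟩ := (hs.of_dvd hne hdvd).exists_eval_eq_zero
    (by rw [degree_X_pow_sub_C (Nat.pos_of_ne_zero hd)]; exact_mod_cast hd)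
  exact ⟨y, by simpa [sub_eq_zero] using hy⟩

section MuIn

variable {K : Type*} [Field K] {ℓ : ℕ} {m : ℕ∞}

theorem MuIn.splits_X_pow_sub_one (hℓ : ℓ ≠ 0) (hμ : MuIn K 1 ℓ m) {t : ℕ}
    (ht : (t : ℕ∞) ≤ m) : Splits (X ^ ℓ ^ t - 1 : K[X]) := by
  cases m with
  | top => simpa using hμ t
  | coe M =>
    have hM : Splits (X ^ ℓ ^ M - 1 : K[X]) := by simpa [MuIn] using hμ
    obtain ⟨c, hc⟩ := pow_dvd_pow ℓ (by exact_mod_cast ht : t ≤ M)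
    refine hM.of_dvd ?_ (hc ▸ pow_one_sub_dvd_pow_mul_sub_one X _ c)
    simpa using X_pow_sub_C_ne_zero (pow_pos (Nat.pos_of_ne_zero hℓ) M) (1 : K)

theorem MuIn.exists_eq_nsmul_of_nsmul_eq_zero (hℓ : ℓ ≠ 0) (hμ : MuIn K 1 ℓ m) {k j : ℕ}
    (hkj : ((j + k : ℕ) : ℕ∞) ≤ m) (a : Additive Kˣ) (ha : ℓ ^ k • a = 0) :
    ∃ b, a = ℓ ^ j • b := by
  have hx : (a.toMul : K) ^ ℓ ^ k = 1 := by
    simpa using congr(((Additive.toMul $ha : Kˣ) : K))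
  have hs : Splits (X ^ (ℓ ^ j * ℓ ^ k) - 1 : K[X]) :=
    pow_add ℓ j k ▸ hμ.splits_X_pow_sub_one hℓ hkj
  obtain ⟨y, hy⟩ := exists_pow_eq_of_splits (pow_ne_zero j hℓ) (pow_ne_zero k hℓ) hs hx
  have hy0 : y ≠ 0 := by
    rintro rfl
    exact a.toMul.ne_zero (by simpa [zero_pow (pow_ne_zero j hℓ)] using hy.symm)
  exact ⟨Additive.ofMul (Units.mk0 y hy0), Additive.toMul.injective (Units.ext (by simp [hy]))⟩

end MuIn

theorem AddMonoidHom.exists_nsmul_eq {A D : Type*} [AddCommGroup A] [AddCommGroup D]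
    [DivisibleBy D ℤ] {d e : ℕ} (h : ∀ a : A, d • a = 0 → ∃ b, a = e • b) (φ : A →+ D)
    (hφ : e • φ = 0) : ∃ ψ : A →+ D, d • ψ = φ := by
  let u : A →+ A := d • AddMonoidHom.id A
  have hker : u.ker ≤ φ.ker := by
    intro a ha
    obtain ⟨b, rfl⟩ := h a ha
    simpa using congr($hφ b)
  -- `ψ` extends `d • a ↦ φ a` from `dA ≅ A ⧸ ker u` to `A`.
  obtain ⟨ψ, hψ⟩ := (Module.Baer.of_divisible D).extension_property_addMonoidHom
    (QuotientAddGroup.kerLift u) (QuotientAddGroup.kerLift_injective u)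
    (QuotientAddGroup.lift u.ker φ hker)
  refine ⟨ψ, AddMonoidHom.ext fun a => ?_⟩
  simpa [u] using congr($hψ (a : A ⧸ u.ker))

theorem AddMonoidHom.exists_eq_mul_of_dvd {A R : Type*} [AddCommGroup A] [Ring R] [IsDomain R]
    {r : R} (hr : r ≠ 0) (σ : A →+ R) (hσ : ∀ a, r ∣ σ a) : ∃ τ : A →+ R, ∀ a, σ a = r * τ a := by
  choose τ hτ using hσ
  refine ⟨AddMonoidHom.mk' τ fun a b => mul_left_cancel₀ hr ?_, hτ⟩
  rw [mul_add, ← hτ, ← hτ, ← hτ, map_add]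

namespace ZMod

theorem castHom_castHom {n m d : ℕ} (hm : n ∣ m) (hd : m ∣ d) (x : ZMod d) :
    castHom hm (ZMod n) (castHom hd (ZMod m) x) = castHom (hm.trans hd) (ZMod n) x :=
  RingHom.congr_fun (castHom_comp hm hd) x

variable {A : Type*} [AddCommGroup A] {M N : ℕ} [NeZero M] [NeZero N]

theorem toAddCircle_castHom (h : N ∣ M) (z : ZMod M) :
    toAddCircle (castHom h (ZMod N) z) = (M / N) • toAddCircle z := by
  obtain ⟨j, rfl⟩ := intCast_surjective z
  rw [map_intCast, toAddCircle_intCast, toAddCircle_intCast, ← AddCircle.coe_nsmul]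
  congr 1
  have hN : (N : ℝ) ≠ 0 := NeZero.ne _
  have hM : (M : ℝ) ≠ 0 := NeZero.ne _
  rw [nsmul_eq_mul, Nat.cast_div h hN]
  field_simp

theorem exists_toAddCircle_eq {u : UnitAddCircle} (hu : N • u = 0) :
    ∃ z : ZMod N, toAddCircle z = u := by
  obtain ⟨k, -, rfl⟩ := (AddCircle.nsmul_eq_zero_iff (NeZero.pos N)).mp hu
  exact ⟨k, by simp [toAddCircle_natCast]⟩

theorem exists_toAddCircle_comp_eq (ψ : A →+ UnitAddCircle) (hψ : N • ψ = 0) :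
    ∃ g : A →+ ZMod N, toAddCircle.comp g = ψ := by
  choose g hg using fun a => exists_toAddCircle_eq (congr($hψ a))
  refine ⟨AddMonoidHom.mk' g fun a b => toAddCircle_injective N ?_, AddMonoidHom.ext hg⟩
  simp [hg]

theorem nsmul_toAddCircle_comp_eq_zero (f : A →+ ZMod N) : N • toAddCircle.comp f = 0 := by
  ext a
  simp [← map_nsmul, nsmul_eq_mul]

theorem exists_castHom_comp_eq (hNM : N ∣ M) (h : ∀ a : A, (M / N) • a = 0 → ∃ b, a = N • b)
    (f : A →+ ZMod N) : ∃ g : A →+ ZMod M, (castHom hNM (ZMod N)).toAddMonoidHom.comp g = f := by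
  obtain ⟨ψ, hψ⟩ := (toAddCircle.comp f).exists_nsmul_eq h (nsmul_toAddCircle_comp_eq_zero f)
  have hMψ : M • ψ = 0 := by
    rw [← Nat.mul_div_cancel' hNM, mul_comm, mul_nsmul, hψ, nsmul_toAddCircle_comp_eq_zero]
  obtain ⟨g, rfl⟩ := exists_toAddCircle_comp_eq ψ hMψ
  refine ⟨g, AddMonoidHom.ext fun a => toAddCircle_injective N ?_⟩
  exact (toAddCircle_castHom hNM (g a)).trans congr($hψ a)

theorem exists_eq_mul_of_castHom_comp_eq_zero (hNM : N ∣ M)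
    (h : ∀ a : A, N • a = 0 → ∃ b, a = (M / N) • b) (σ : A →+ ZMod M)
    (hσ : (castHom hNM (ZMod N)).toAddMonoidHom.comp σ = 0) :
    ∃ τ : A →+ ZMod M, ∀ a, σ a = N * τ a := by
  have hφ : (M / N) • toAddCircle.comp σ = 0 := by
    ext a
    exact (toAddCircle_castHom hNM (σ a)).symm.trans (by simpa using congr(toAddCircle ($hσ a)))
  obtain ⟨ψ, hψ⟩ := (toAddCircle.comp σ).exists_nsmul_eq h hφ
  have hMψ : M • ψ = 0 := by
    rw [← Nat.mul_div_cancel' hNM, mul_nsmul, hψ, hφ]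
  obtain ⟨τ, rfl⟩ := exists_toAddCircle_comp_eq ψ hMψ
  refine ⟨τ, fun a => toAddCircle_injective M ?_⟩
  simpa [← nsmul_eq_mul] using congr($hψ a).symm

end ZMod

namespace PadicInt

variable {p : ℕ} [Fact p.Prime] {A : Type*} [AddCommGroup A]

theorem exists_toZModPow_eq (c : ∀ k, ZMod (p ^ k))
    (hc : ∀ k, ZMod.castHom (pow_dvd_pow p k.le_succ) _ (c (k + 1)) = c k) :
    ∃ x : ℤ_[p], ∀ k, toZModPow k x = c k := by
  set s : ℕ → ℤ := fun k => (c k).val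
  have hdvd : ∀ i, (p : ℤ) ^ i ∣ s (i + 1) - s i := by
    intro i
    rw [← Nat.cast_pow, ← ZMod.intCast_eq_intCast_iff_dvd_sub, Int.cast_natCast, Int.cast_natCast,
      ZMod.natCast_zmod_val, ← ZMod.cast_eq_val, ← hc i, ZMod.castHom_apply]
  refine ⟨ofIntSeq s (isCauSeq_padicNorm_of_pow_dvd_sub s p hdvd), fun k => ?_⟩
  rw [toZModPow_ofIntSeq_of_pow_dvd_sub s p hdvd k]
  simp [s]

theorem exists_toZModPow_comp_eq_of_compat (g : ∀ k, A →+ ZMod (p ^ k))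
    (hg : ∀ k, (ZMod.castHom (pow_dvd_pow p k.le_succ) _).toAddMonoidHom.comp (g (k + 1)) = g k) :
    ∃ G : A →+ ℤ_[p], ∀ k, (toZModPow k).toAddMonoidHom.comp G = g k := by
  choose G hG using fun a => exists_toZModPow_eq (fun k => g k a) (fun k => congr($(hg k) a))
  refine ⟨AddMonoidHom.mk' G fun a b => ext_of_toZModPow.mp fun k => ?_,
    fun k => AddMonoidHom.ext fun a => hG a k⟩
  simp [hG]

theorem exists_toZModPow_comp_eq
    (hlift : ∀ k (f : A →+ ZMod (p ^ k)), ∃ g : A →+ ZMod (p ^ (k + 1)),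
      (ZMod.castHom (pow_dvd_pow p k.le_succ) _).toAddMonoidHom.comp g = f)
    (n : ℕ) (f : A →+ ZMod (p ^ n)) :
    ∃ G : A →+ ℤ_[p], (toZModPow n).toAddMonoidHom.comp G = f := by
  choose L hL using hlift
  let h : ∀ j, A →+ ZMod (p ^ (n + j)) := fun j => Nat.rec f (fun j w => L (n + j) w) j
  have h_cast : ∀ {i j} (hij : i ≤ j) a,
      ZMod.castHom (pow_dvd_pow p (Nat.add_le_add_left hij n)) (ZMod (p ^ (n + i))) (h j a) =
        h i a := by
    intro i j hij
    induction j, hij using Nat.le_induction with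
    | base => simp
    | succ j hij ih =>
      intro a
      rw [← ih, ← congr($(hL (n + j) (h j)) a)]
      exact (ZMod.castHom_castHom _ (pow_dvd_pow p (n + j).le_succ) _).symm
  obtain ⟨G, hG⟩ := exists_toZModPow_comp_eq_of_compat
    (fun k => (ZMod.castHom (pow_dvd_pow p (k.le_add_left n)) _).toAddMonoidHom.comp (h k))
    fun k => AddMonoidHom.ext fun a => by
      simp only [AddMonoidHom.comp_apply, RingHom.toAddMonoidHom_eq_coe, AddMonoidHom.coe_coe]
      rw [← h_cast k.le_succ a, ZMod.castHom_castHom, ZMod.castHom_castHom]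
  exact ⟨G, (hG n).trans (AddMonoidHom.ext (h_cast n.zero_le))⟩

end PadicInt

theorem LamProj_coe_coe (ℓ : ℕ) [Fact ℓ.Prime] {m n : ℕ} (h : n ≤ m) :
    LamProj ℓ m n = (ZMod.castHom (pow_dvd_pow ℓ h) (ZMod (ℓ ^ n))).toAddMonoidHom :=
  dif_pos _

section Gal

variable {ℓ : ℕ} [Fact ℓ.Prime] {K : Type*} [Field K]

theorem galProj_galSmul_pow {m : ℕ∞} {n : ℕ} (hnm : (n : ℕ∞) ≤ m) (τ : gal ℓ m K) :
    galProj m n (galSmul ((ℓ : Lam ℓ m) ^ n) τ) = 0 := by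
  have hℓn : (ℓ : ZMod (ℓ ^ n)) ^ n = 0 := by rw [← Nat.cast_pow, ZMod.natCast_self]
  cases m with
  | top =>
    ext a
    change PadicInt.toZModPow n ((ℓ : ℤ_[ℓ]) ^ n * (show ℤ_[ℓ] from τ a)) = 0
    rw [map_mul, map_pow, map_natCast, hℓn, zero_mul]
  | coe m =>
    have hnm : n ≤ m := by exact_mod_cast hnm
    change (LamProj ℓ m n).comp _ = 0
    rw [LamProj_coe_coe ℓ hnm]
    ext a
    change ZMod.castHom (pow_dvd_pow ℓ hnm) (ZMod (ℓ ^ n))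
      ((ℓ : ZMod (ℓ ^ m)) ^ n * (show ZMod (ℓ ^ m) from τ a)) = 0
    rw [map_mul, map_pow, map_natCast, hℓn, zero_mul]

theorem galProj_surjective {m n : ℕ∞} (hnm : n ≤ m) (hμ : MuIn K 1 ℓ m) :
    Function.Surjective (galProj m n : gal ℓ m K → gal ℓ n K) := by
  have hℓ : ℓ.Prime := Fact.out
  cases n with
  | top =>
    obtain rfl := top_le_iff.mp hnm
    exact fun σ => ⟨σ, AddMonoidHom.id_comp σ⟩
  | coe n =>
    cases m with
    | top =>
      have hdiv (k : ℕ) (a : Additive Kˣ) :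
          (ℓ ^ (k + 1) / ℓ ^ k) • a = 0 → ∃ b, a = ℓ ^ k • b := by
        rw [pow_succ, Nat.mul_div_cancel_left _ (pow_pos hℓ.pos k)]
        simpa using hμ.exists_eq_nsmul_of_nsmul_eq_zero hℓ.ne_zero (k := 1) (j := k) le_top a
      exact PadicInt.exists_toZModPow_comp_eq (p := ℓ)
        (fun k => ZMod.exists_castHom_comp_eq _ (hdiv k)) n
    | coe m =>
      have hnm : n ≤ m := by exact_mod_cast hnm
      have hdiv (a : Additive Kˣ) : (ℓ ^ m / ℓ ^ n) • a = 0 → ∃ b, a = ℓ ^ n • b := by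
        rw [Nat.pow_div hnm hℓ.pos]
        exact hμ.exists_eq_nsmul_of_nsmul_eq_zero hℓ.ne_zero (by simp [Nat.add_sub_cancel' hnm]) a
      intro f
      obtain ⟨g, hg⟩ := ZMod.exists_castHom_comp_eq (pow_dvd_pow ℓ hnm) hdiv f
      refine ⟨g, ?_⟩
      change (LamProj ℓ m n).comp g = f
      rwa [LamProj_coe_coe ℓ hnm]

theorem setOf_galProj_eq_zero {m n : ℕ∞} (hnm : n ≤ m) (hμ : MuIn K 1 ℓ m) :
    {σ : gal ℓ m K | galProj m n σ = 0} = lPowSet ℓ m K n := by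
  have hℓ : ℓ.Prime := Fact.out
  cases n with
  | top =>
    obtain rfl := top_le_iff.mp hnm
    ext σ
    exact (AddMonoidHom.id_comp σ).symm ▸ Iff.rfl
  | coe n =>
    refine Set.Subset.antisymm (fun σ hσ => ?_) ?_
    swap
    · rintro _ ⟨τ, rfl⟩
      exact galProj_galSmul_pow hnm τ
    cases m with
    | top =>
      obtain ⟨τ, hτ⟩ := AddMonoidHom.exists_eq_mul_of_dvd (R := ℤ_[ℓ])
        (pow_ne_zero n (Nat.cast_ne_zero.mpr hℓ.ne_zero)) (σ : Additive Kˣ →+ ℤ_[ℓ]) fun a => by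
          rw [← Ideal.mem_span_singleton, ← PadicInt.ker_toZModPow]
          exact congr($hσ a)
      exact ⟨τ, AddMonoidHom.ext hτ⟩
    | coe m =>
      have hnm : n ≤ m := by exact_mod_cast hnm
      have hdiv (a : Additive Kˣ) : ℓ ^ n • a = 0 → ∃ b, a = (ℓ ^ m / ℓ ^ n) • b := by
        rw [Nat.pow_div hnm hℓ.pos]
        exact hμ.exists_eq_nsmul_of_nsmul_eq_zero hℓ.ne_zero (by simp [Nat.sub_add_cancel hnm]) a
      obtain ⟨τ, hτ⟩ := ZMod.exists_eq_mul_of_castHom_comp_eq_zero (pow_dvd_pow ℓ hnm) hdiv σ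
        (LamProj_coe_coe ℓ hnm ▸ hσ)
      exact ⟨τ, AddMonoidHom.ext fun a => (hτ a).trans (by push_cast; rfl)⟩

end Gal

theorem stmt9_general (ℓ : ℕ) [Fact ℓ.Prime] (m n : ℕ∞) (hnm : n ≤ m)
    (K : Type*) [Field K] (hμ : MuIn K 1 ℓ m) :
    Function.Surjective (galProj m n : gal ℓ m K → gal ℓ n K) ∧
    {σ : gal ℓ m K | galProj m n σ = 0} = lPowSet ℓ m K n :=
  ⟨galProj_surjective hnm hμ, setOf_galProj_eq_zero hnm hμ⟩

/-- Surjectivity of `𝔤^m(K) → 𝔤^n(K)` and computation of its kernel. -/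
theorem stmt9 (ℓ : ℕ) [Fact ℓ.Prime] (m n : ℕ∞) (hn : 1 ≤ n) (hnm : n ≤ m)
    (K : Type*) [Field K] (hμ : MuIn K 1 ℓ m) :
    Function.Surjective (galProj m n : gal ℓ m K → gal ℓ n K) ∧
    {σ : gal ℓ m K | galProj m n σ = 0} = lPowSet ℓ m K n :=
  stmt9_general ℓ m n hnm K hμ
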